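/- The formula φ2 := ∀x∃y□(□□P(x,y)) ∧ ∀x□(□□¬P(x,x)) ∧ ∀x□∀y□∀z□((P(x,y)∧P(y,z))→P(x,z)) ∧ ◇◇◇⊤ is satisfiable in an increasing domain model with infinite domain D; moreover, for every increasing domain model M and world w, if M,w ⊨ φ2 then the local domain δ(w) is infinite. Hence every fragment of FOML that can express formulas of the form ∀x∃y□α lacks the finite model property over increasing domain models. -/

import Mathlib

set_option maxHeartbeats 1000000

/-! ## Syntax of first-order modal logic (FOML)

Predicate symbols and variables are represented by natural numbers; an atom
`atom p args` applies the predicate symbol `p` to the list of variables `args`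
(the arity of `p` in this occurrence is the length of `args`). -/
inductive Formula : Type where
  | atom (p : ℕ) (args : List ℕ)
  | neg  (φ : Formula)
  | and  (φ ψ : Formula)
  | or   (φ ψ : Formula)
  | box  (φ : Formula)
  | dia  (φ : Formula)
  | ex   (x : ℕ) (φ : Formula)
  | all  (x : ℕ) (φ : Formula)
deriving DecidableEq

namespace Formula

def imp (φ ψ : Formula) : Formula := .or φ.neg ψ
def biimp (φ ψ : Formula) : Formula := .and (imp φ ψ) (imp ψ φ)
/-- a fixed tautology `⊤` -/
def top : Formula := .or (.atom 0 []) (.neg (.atom 0 []))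
/-- a fixed contradiction `⊥` -/
def bot : Formula := .and (.atom 0 []) (.neg (.atom 0 []))

end Formula

def bigAnd (l : List Formula) : Formula := l.foldr Formula.and Formula.top
def bigOr  (l : List Formula) : Formula := l.foldr Formula.or Formula.bot

/-! ## Semantics: Kripke structures with world-relative domains -/

structure Model where
  W : Type
  D : Type
  R : W → W → Prop
  dom : W → Set D
  ρ : W → ℕ → Set (List D)

/-- `M` is an increasing domain model: nonempty countable set of worlds, nonempty
countable domain, nonempty local domains that increase along the accessibility
relation, and interpretations of predicates at a world take values in the local
domain of that world. -/
def Model.Increasing (M : Model) : Prop :=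
  Nonempty M.W ∧ Nonempty M.D ∧ Countable M.W ∧ Countable M.D ∧
    (∀ w, (M.dom w).Nonempty) ∧
    (∀ w v, M.R w v → M.dom w ⊆ M.dom v) ∧
    (∀ w p l, l ∈ M.ρ w p → ∀ d ∈ l, d ∈ M.dom w)

def Model.sat (M : Model) : M.W → (ℕ → M.D) → Formula → Prop
  | w, σ, .atom p args => args.map σ ∈ M.ρ w p
  | w, σ, .neg φ => ¬ M.sat w σ φ
  | w, σ, .and φ ψ => M.sat w σ φ ∧ M.sat w σ ψ
  | w, σ, .or φ ψ => M.sat w σ φ ∨ M.sat w σ ψ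
  | w, σ, .box φ => ∀ v, M.R w v → M.sat v σ φ
  | w, σ, .dia φ => ∃ v, M.R w v ∧ M.sat v σ φ
  | w, σ, .ex x φ => ∃ d ∈ M.dom w, M.sat w (Function.update σ x d) φ
  | w, σ, .all x φ => ∀ d ∈ M.dom w, M.sat w (Function.update σ x d) φ

/-- the assignment `σ` is relevant at the world `w` -/
def Model.relevant (M : Model) (w : M.W) (σ : ℕ → M.D) : Prop := ∀ x, σ x ∈ M.dom w

/-- satisfiability over increasing domain models -/
def Satisfiable (φ : Formula) : Prop :=
  ∃ (M : Model), M.Increasing ∧ ∃ (w : M.W) (σ : ℕ → M.D), M.relevant w σ ∧ M.sat w σ φ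

/-- the binary predicate `P` -/
def atomP (x y : ℕ) : Formula := .atom 0 [x, y]

/-- `φ2 := ∀x∃y□(□□P(x,y)) ∧ ∀x□(□□¬P(x,x)) ∧
∀x□∀y□∀z□((P(x,y) ∧ P(y,z)) → P(x,z)) ∧ ◇◇◇⊤`,
with variables `x := 0`, `y := 1`, `z := 2`. -/
def phi2 : Formula :=
  .and (.all 0 (.ex 1 (.box (.box (.box (atomP 0 1))))))
    (.and (.all 0 (.box (.box (.box (.neg (atomP 0 0))))))
      (.and (.all 0 (.box (.all 1 (.box (.all 2 (.box
          (Formula.imp (.and (atomP 0 1) (atomP 1 2)) (atomP 0 2))))))))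
        (.dia (.dia (.dia Formula.top)))))

/-! A world satisfying `φ2` has a successor `v` three steps away. The first conjunct makes the
interpretation of `P` at `v` serial on `δ(w)`, the second makes it irreflexive there, and the third
(read along the path to `v`, using that domains increase) makes it transitive there. A finite
nonempty set carries no serial strict order, so `δ(w)` is infinite; conversely `<` on `ℕ` at a
single reflexive world satisfies `φ2`. -/

theorem Set.infinite_of_forall_exists_rel {α : Type*} {s : Set α} {r : α → α → Prop}
    (hne : s.Nonempty) (hirrefl : ∀ a ∈ s, ¬ r a a)
    (htrans : ∀ a ∈ s, ∀ b ∈ s, ∀ c ∈ s, r a b → r b c → r a c)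
    (hserial : ∀ a ∈ s, ∃ b ∈ s, r a b) : s.Infinite := by
  intro hfin
  have := hfin.to_subtype
  let r' : s → s → Prop := fun a b => r b a
  have : IsTrans s r' := ⟨fun a b c hab hbc => htrans c c.2 b b.2 a a.2 hbc hab⟩
  have : Std.Irrefl r' := ⟨fun a => hirrefl a a.2⟩
  obtain ⟨⟨a, ha⟩, -, hmax⟩ :=
    (Finite.wellFounded_of_trans_of_irrefl r').has_min Set.univ ⟨⟨_, hne.some_mem⟩, trivial⟩
  obtain ⟨b, hb, hab⟩ := hserial a ha
  exact hmax ⟨b, hb⟩ trivial hab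

namespace Model

variable (M : Model)

@[simp]
theorem sat_atomP (w : M.W) (σ : ℕ → M.D) (x y : ℕ) :
    M.sat w σ (atomP x y) ↔ [σ x, σ y] ∈ M.ρ w 0 :=
  Iff.rfl

@[simp]
theorem sat_imp (w : M.W) (σ : ℕ → M.D) (φ ψ : Formula) :
    M.sat w σ (φ.imp ψ) ↔ (M.sat w σ φ → M.sat w σ ψ) :=
  imp_iff_not_or.symm

theorem dom_infinite_of_sat_phi2 (hmono : ∀ w v, M.R w v → M.dom w ⊆ M.dom v) {w : M.W}
    (hne : (M.dom w).Nonempty) {σ : ℕ → M.D} (h : M.sat w σ phi2) : (M.dom w).Infinite := by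
  obtain ⟨hserial, hirrefl, htrans, v₁, hwv₁, v₂, hv₁v₂, v, hv₂v, -⟩ := h
  refine Set.infinite_of_forall_exists_rel (r := fun a b => [a, b] ∈ M.ρ v 0) hne
    ?_ ?_ ?_
  · intro a ha
    simpa [Model.sat] using hirrefl a ha v₁ hwv₁ v₂ hv₁v₂ v hv₂v
  · intro a ha b hb c hc hab hbc
    have hb₁ := hmono w v₁ hwv₁ hb
    have hc₂ := hmono v₁ v₂ hv₁v₂ (hmono w v₁ hwv₁ hc)
    simpa [Model.sat, hab, hbc] using
      htrans a ha v₁ hwv₁ b hb₁ v₂ hv₁v₂ c hc₂ v hv₂v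
  · intro a ha
    obtain ⟨b, hb, hbox⟩ := hserial a ha
    exact ⟨b, hb, by simpa [Model.sat] using hbox v₁ hwv₁ v₂ hv₁v₂ v hv₂v⟩

end Model

abbrev natLtModel : Model :=
  ⟨Unit, ℕ, fun _ _ => True, fun _ => Set.univ,
    fun _ _ => {l | ∃ a b : ℕ, l = [a, b] ∧ a < b}⟩

theorem natLtModel_increasing : natLtModel.Increasing :=
  ⟨⟨()⟩, ⟨0⟩, inferInstanceAs (Countable Unit), inferInstanceAs (Countable ℕ),
    fun _ => Set.univ_nonempty, fun _ _ _ => subset_rfl, fun _ _ _ _ _ _ => trivial⟩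

theorem natLtModel_sat_phi2 (σ : ℕ → ℕ) : natLtModel.sat () σ phi2 := by
  refine ⟨?_, ?_, ?_, ?_⟩
  · intro a _
    exact ⟨a + 1, trivial, fun _ _ _ _ _ _ => by simp⟩
  · intro a _ _ _ _ _ _ _
    simp [Model.sat]
  · intro a _ _ _ b _ _ _ c _ _ _
    simpa [Model.sat] using fun (hab : a < b) (hbc : b < c) => hab.trans hbc
  · exact ⟨(), trivial, (), trivial, (), trivial, Classical.em _⟩

/-- The formula `φ2` (which only uses quantification of the
form `∀x∃y□α`, `∀x□α` and `□α`) is satisfiable in an increasing domain model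
with infinite domain; moreover, in every increasing domain model, the local
domain of every world satisfying `φ2` is infinite.  Hence every fragment of
FOML that can express `∀x∃y□α` lacks the finite model property over increasing
domain models. -/
theorem forall_exists_box_no_fmp :
    (∃ M : Model, M.Increasing ∧ Infinite M.D ∧
      ∃ (w : M.W) (σ : ℕ → M.D), M.relevant w σ ∧ M.sat w σ phi2) ∧
    (∀ M : Model, M.Increasing →
      ∀ (w : M.W) (σ : ℕ → M.D), M.relevant w σ → M.sat w σ phi2 →
        (M.dom w).Infinite) :=
  ⟨⟨natLtModel, natLtModel_increasing, inferInstanceAs (Infinite ℕ), (), fun _ => 0,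
      fun _ => trivial, natLtModel_sat_phi2 _⟩,
    fun M ⟨_, _, _, _, hne, hmono, _⟩ w _ _ h => M.dom_infinite_of_sat_phi2 hmono (hne w) h⟩
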